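/- Suppose d ∈ ℕ and the transition matrix factorizes as P = C * Uᵀ, where C : Matrix (S × A) (Fin d) ℝ (rows χ(s,a)) and U : Matrix S (Fin d) ℝ (rows μ(s')). For a deterministic policy π let C_π := E_π * C (so the row of C_π at s is χ(s, π s)). Then the d × d matrix 1 - γ • (Uᵀ * C_π) is invertible, and for every reward r : S → ℝ, Q^π_r = C.mulVec ((1 - γ • (Uᵀ * C_π))⁻¹.mulVec (Uᵀ.mulVec r)). In particular, every Q-function Q^π_r is a linear combination of the columns of C and depends on r only through the vector Uᵀ.mulVec r ∈ ℝ^d. -/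

import Mathlib

open Matrix

/-- The selection matrix `E_π` of a deterministic policy `π : S → A`:
`E_π (s, (s',a)) = 1` if `s' = s` and `a = π s`, and `0` otherwise. -/
noncomputable def selMat {S A : Type*} [DecidableEq S] [DecidableEq A] (π : S → A) :
    Matrix S (S × A) ℝ :=
  fun s p => if p.1 = s ∧ p.2 = π s then 1 else 0

/-- The Q-function of policy `π` for reward `r`:
`Q^π_r = ∑_{t ≥ 0} γ^t • ((P * E_π)^t).mulVec (P.mulVec r)`. -/
noncomputable def Qfun {S A : Type*} [Fintype S] [Fintype A] [DecidableEq S] [DecidableEq A]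
    (P : Matrix (S × A) S ℝ) (γ : ℝ) (π : S → A) (r : S → ℝ) : S × A → ℝ :=
  ∑' t : ℕ, γ ^ t • ((P * selMat π) ^ t).mulVec (P.mulVec r)

/-!
The state-action transition matrix `M = P E_π` of a policy is row-stochastic, so `‖γ M‖ < 1` in
the `L∞`-operator norm and the series defining `Q^π_r` is the Neumann series of
`(1 - γ M)⁻¹ (P r)`. If `P = C Uᵀ` then `γ M = C B` with `B = γ Uᵀ E_π`, and the push-through
identity `(1 - C B)⁻¹ C = C (1 - B C)⁻¹` moves the inverse to the `d × d` side, where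
`1 - B C = 1 - γ Uᵀ C_π` is invertible because `det (1 - C B) = det (1 - B C)`.
-/

namespace Matrix

section PushThrough

variable {m n R : Type*} [Fintype m] [Fintype n] [DecidableEq m] [DecidableEq n] [CommRing R]

theorem isUnit_one_sub_mul_comm {A : Matrix m n R} {B : Matrix n m R}
    (h : IsUnit (1 - A * B)) : IsUnit (1 - B * A) := by
  rw [isUnit_iff_isUnit_det, ← det_one_sub_mul_comm, ← isUnit_iff_isUnit_det]
  exact h

theorem mul_one_sub_mul_comm (A : Matrix m n R) (B : Matrix n m R) :
    A * (1 - B * A) = (1 - A * B) * A := by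
  simp only [Matrix.mul_sub, Matrix.sub_mul, Matrix.mul_one, Matrix.one_mul, Matrix.mul_assoc]

/-- Holds unconditionally: when `1 - A * B` is singular so is `1 - B * A`, and both sides
vanish. -/
theorem inv_one_sub_mul_mul_comm (A : Matrix m n R) (B : Matrix n m R) :
    (1 - A * B)⁻¹ * A = A * (1 - B * A)⁻¹ := by
  by_cases h : IsUnit (1 - A * B).det
  · have h' : IsUnit (1 - B * A).det := by rwa [← det_one_sub_mul_comm]
    calc (1 - A * B)⁻¹ * A = (1 - A * B)⁻¹ * (A * (1 - B * A)) * (1 - B * A)⁻¹ := by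
          rw [Matrix.mul_assoc, Matrix.mul_assoc, mul_nonsing_inv _ h', Matrix.mul_one]
      _ = A * (1 - B * A)⁻¹ := by
          rw [mul_one_sub_mul_comm, ← Matrix.mul_assoc, nonsing_inv_mul _ h, Matrix.one_mul]
  · have h' : ¬IsUnit (1 - B * A).det := by rwa [← det_one_sub_mul_comm]
    rw [nonsing_inv_apply_not_isUnit _ h, nonsing_inv_apply_not_isUnit _ h',
      Matrix.zero_mul, Matrix.mul_zero]

end PushThrough

section RowStochastic

attribute [local instance] Matrix.linftyOpNormedAddCommGroup Matrix.linftyOpNormedRing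
  Matrix.linftyOpNormedSpace

variable {n : Type*} [Fintype n] [DecidableEq n] {M : Matrix n n ℝ}

theorem linfty_opNorm_le_one_of_mem_rowStochastic (hM : M ∈ rowStochastic ℝ n) : ‖M‖ ≤ 1 := by
  rw [linfty_opNorm_def, NNReal.coe_le_one]
  refine Finset.sup_le fun i _ => ?_
  rw [← NNReal.coe_le_coe]
  push_cast
  simp_rw [Real.norm_of_nonneg (nonneg_of_mem_rowStochastic hM)]
  exact (sum_row_of_mem_rowStochastic hM i).le

theorem linfty_opNorm_smul_lt_one_of_mem_rowStochastic (hM : M ∈ rowStochastic ℝ n) {γ : ℝ}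
    (hγ0 : 0 ≤ γ) (hγ1 : γ < 1) : ‖γ • M‖ < 1 := by
  rw [norm_smul, Real.norm_of_nonneg hγ0]
  exact (mul_le_of_le_one_right hγ0 (linfty_opNorm_le_one_of_mem_rowStochastic hM)).trans_lt hγ1

theorem isUnit_one_sub_smul_of_mem_rowStochastic (hM : M ∈ rowStochastic ℝ n) {γ : ℝ}
    (hγ0 : 0 ≤ γ) (hγ1 : γ < 1) : IsUnit (1 - γ • M) :=
  isUnit_one_sub_of_norm_lt_one (linfty_opNorm_smul_lt_one_of_mem_rowStochastic hM hγ0 hγ1)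

theorem hasSum_geometric_of_mem_rowStochastic (hM : M ∈ rowStochastic ℝ n) {γ : ℝ}
    (hγ0 : 0 ≤ γ) (hγ1 : γ < 1) : HasSum (fun t : ℕ => γ ^ t • M ^ t) (1 - γ • M)⁻¹ := by
  simp_rw [← smul_pow, nonsing_inv_eq_ringInverse]
  exact hasSum_geom_series_inverse _ (linfty_opNorm_smul_lt_one_of_mem_rowStochastic hM hγ0 hγ1)

end RowStochastic

end Matrix

section Policy

variable {S A : Type*} [Fintype S] [DecidableEq S] [DecidableEq A]

theorem mul_selMat_apply {m : Type*} (P : Matrix m S ℝ) (π : S → A) (i : m) (q : S × A) :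
    (P * selMat π) i q = if q.2 = π q.1 then P i q.1 else 0 := by
  rw [mul_apply, Finset.sum_eq_single q.1]
  · simp [selMat]
  · intro s _ hs
    simp [selMat, Ne.symm hs]
  · simp

variable [Fintype A]

theorem mul_selMat_mem_rowStochastic {P : Matrix (S × A) S ℝ} (hP0 : ∀ sa s', 0 ≤ P sa s')
    (hP1 : ∀ sa, ∑ s', P sa s' = 1) (π : S → A) :
    P * selMat π ∈ rowStochastic ℝ (S × A) := by
  refine mem_rowStochastic_iff_sum.2 ⟨fun i q => ?_, fun i => ?_⟩
  · rw [mul_selMat_apply]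
    split_ifs
    exacts [hP0 i q.1, le_rfl]
  · simp [mul_selMat_apply, Fintype.sum_prod_type, hP1]

theorem Qfun_eq_inv_mulVec {P : Matrix (S × A) S ℝ} (hP0 : ∀ sa s', 0 ≤ P sa s')
    (hP1 : ∀ sa, ∑ s', P sa s' = 1) {γ : ℝ} (hγ0 : 0 ≤ γ) (hγ1 : γ < 1) (π : S → A)
    (r : S → ℝ) : Qfun P γ π r = (1 - γ • (P * selMat π))⁻¹ *ᵥ (P *ᵥ r) := by
  have hsum := (hasSum_geometric_of_mem_rowStochastic (mul_selMat_mem_rowStochastic hP0 hP1 π)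
    hγ0 hγ1).map (mulVec.addMonoidHomLeft (P *ᵥ r)) (continuous_id.matrix_mulVec continuous_const)
  rw [Qfun]
  simp only [← smul_mulVec]
  exact hsum.tsum_eq

end Policy

theorem stmt7_general {S A : Type*} [Fintype S] [Fintype A]
    [DecidableEq S] [DecidableEq A]
    (P : Matrix (S × A) S ℝ) (γ : ℝ)
    (hP0 : ∀ sa s', 0 ≤ P sa s') (hP1 : ∀ sa, ∑ s', P sa s' = 1)
    (hγ0 : 0 ≤ γ) (hγ1 : γ < 1)
    {d : ℕ} (C : Matrix (S × A) (Fin d) ℝ) (U : Matrix S (Fin d) ℝ)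
    (hP : P = C * Uᵀ) (π : S → A) :
    IsUnit (1 - γ • (Uᵀ * (selMat π * C))) ∧
    ∀ r : S → ℝ,
      Qfun P γ π r =
        C.mulVec ((1 - γ • (Uᵀ * (selMat π * C)))⁻¹.mulVec (Uᵀ.mulVec r)) := by
  set B := γ • (Uᵀ * selMat π)
  have hCB : γ • (P * selMat π) = C * B := by rw [hP, Matrix.mul_smul, Matrix.mul_assoc]
  have hBC : γ • (Uᵀ * (selMat π * C)) = B * C := by rw [Matrix.smul_mul, Matrix.mul_assoc]
  have hunit : IsUnit (1 - C * B) :=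
    hCB ▸ isUnit_one_sub_smul_of_mem_rowStochastic (mul_selMat_mem_rowStochastic hP0 hP1 π) hγ0 hγ1
  refine ⟨hBC ▸ isUnit_one_sub_mul_comm hunit, fun r => ?_⟩
  rw [Qfun_eq_inv_mulVec hP0 hP1 hγ0 hγ1, hCB, hBC, hP, ← mulVec_mulVec, mulVec_mulVec,
    inv_one_sub_mul_mul_comm, ← mulVec_mulVec]

/-- If the transition matrix factorizes as `P = C * Uᵀ`, then with
`C_π := E_π * C`, the `d × d` matrix `1 - γ • (Uᵀ * C_π)` is invertible and every Q-function
is given by `Q^π_r = C.mulVec ((1 - γ • (Uᵀ * C_π))⁻¹.mulVec (Uᵀ.mulVec r))`; in particular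
it is a linear combination of the columns of `C` and depends on `r` only through
`Uᵀ.mulVec r`. -/
theorem stmt7 {S A : Type*} [Fintype S] [Fintype A] [Nonempty S] [Nonempty A]
    [DecidableEq S] [DecidableEq A]
    (P : Matrix (S × A) S ℝ) (γ : ℝ)
    (hP0 : ∀ sa s', 0 ≤ P sa s') (hP1 : ∀ sa, ∑ s', P sa s' = 1)
    (hγ0 : 0 ≤ γ) (hγ1 : γ < 1)
    {d : ℕ} (C : Matrix (S × A) (Fin d) ℝ) (U : Matrix S (Fin d) ℝ)
    (hP : P = C * Uᵀ) (π : S → A) :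
    IsUnit (1 - γ • (Uᵀ * (selMat π * C))) ∧
    ∀ r : S → ℝ,
      Qfun P γ π r =
        C.mulVec ((1 - γ • (Uᵀ * (selMat π * C)))⁻¹.mulVec (Uᵀ.mulVec r)) :=
  stmt7_general P γ hP0 hP1 hγ0 hγ1 C U hP π
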